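/- arXiv:1106.5119 — 2 statements merged into one kernel-verified Lean document; each statement's English description precedes it below -/
import Mathlib

section
/- Let (α_M) be a real sequence contained in a compact subset of (−1/2, 1/2] and converging to α as M → ∞, and set q_M(α_M) = (1/M) Σ_{k=1}^M e^{−2πik·α_M}. If α ≠ 0, or if α = 0 and M|α_M| → ∞, then q_M(α_M) → 0. If α = 0 and M·α_M → β ∈ ℝ, then q_M(α_M) → e^{−iπβ}·sin(πβ)/(πβ), with the limit interpreted as 1 when β = 0. -/
open MeasureTheory ProbabilityTheory Matrix Filter Topology

noncomputable section

namespace RMT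

/-- The spectral norm (ℓ²-operator norm) of a complex matrix. -/
def specNorm {p q : ℕ} (A : Matrix (Fin p) (Fin q) ℂ) : ℝ :=
  ‖LinearMap.toContinuousLinearMap (Matrix.toEuclideanLin A)‖

/-- Euclidean norm of a complex vector. -/
def l2norm {p : ℕ} (v : Fin p → ℂ) : ℝ := Real.sqrt (∑ i, ‖v i‖ ^ 2)

lemma isHermitian_diag_add_ones {p : ℕ} (d : Fin p → ℝ) (γ : ℝ) :
    (Matrix.diagonal d + γ • Matrix.of (fun _ _ => (1 : ℝ)) :
      Matrix (Fin p) (Fin p) ℝ).IsHermitian := by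
  unfold Matrix.IsHermitian
  ext i j
  by_cases h : i = j
  · subst h; simp [Matrix.conjTranspose_apply, Matrix.diagonal_apply, Matrix.add_apply]
  · simp [Matrix.conjTranspose_apply, Matrix.diagonal_apply, Matrix.add_apply, h, Ne.symm h]

/-- Deterministic data of the model + assumptions (A1), (A2), (A3) and the
simplicity of the nonzero eigenvalues of `B_N B_N^*`. -/
structure Model where
  σ : ℝ
  hσ : 0 < σ
  M : ℕ → ℕ
  K : ℕ → ℕ
  hK1 : ∀ n, 1 ≤ K n
  hKM : ∀ n, K n < M n
  climit : ℝ
  hclimit : 0 < climit ∧ climit < 1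
  hcN : ∀ n, 1 ≤ n → 0 < (M n : ℝ) / n ∧ (M n : ℝ) / n < 1
  hcNtendsto : Filter.Tendsto (fun n => (M n : ℝ) / n) Filter.atTop (nhds climit)
  B : (n : ℕ) → Matrix (Fin (M n)) (Fin n) ℂ
  hBnorm : ∃ C : ℝ, ∀ n, specNorm (B n) ≤ C
  hBrank : ∀ n, (B n * (B n)ᴴ).rank = K n
  hBsimple : ∀ n (k l : Fin (M n)),
      (Matrix.isHermitian_mul_conjTranspose_self (B n)).eigenvalues k =
        (Matrix.isHermitian_mul_conjTranspose_self (B n)).eigenvalues l →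
      (Matrix.isHermitian_mul_conjTranspose_self (B n)).eigenvalues k ≠ 0 → k = l

/-- Stieltjes transform `m_N(z)` of `μ_N` -/
def mSt (μ : ℕ → Measure ℝ) (n : ℕ) (z : ℂ) : ℂ := ∫ t : ℝ, ((t : ℂ) - z)⁻¹ ∂(μ n)

namespace Model

variable (S : Model)

def cN (n : ℕ) : ℝ := (S.M n : ℝ) / n

/-- eigenvalues of `B_N B_N^*` -/
def lamB (n : ℕ) : Fin (S.M n) → ℝ :=
  (Matrix.isHermitian_mul_conjTranspose_self (S.B n)).eigenvalues

/-- (A4) : the entries of `W_N` are i.i.d. `CN(0, σ²/N)` distributed. -/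
def GaussianIID {Ω : Type*} [MeasurableSpace Ω] (P : Measure Ω)
    (W : ∀ n, Ω → Matrix (Fin (S.M n)) (Fin n) ℂ) : Prop :=
  (∀ n i j, Measurable fun ω => (W n ω) i j) ∧
  (∀ n, iIndepFun
      (fun (p : (Fin (S.M n) × Fin n) × Bool) ω =>
        if p.2 then ((W n ω) p.1.1 p.1.2).re else ((W n ω) p.1.1 p.1.2).im) P) ∧
  (∀ n, 1 ≤ n → ∀ i j,
      Measure.map (fun ω => ((W n ω) i j).re) P
        = gaussianReal 0 (Real.toNNReal (S.σ ^ 2 / (2 * n))) ∧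
      Measure.map (fun ω => ((W n ω) i j).im) P
        = gaussianReal 0 (Real.toNNReal (S.σ ^ 2 / (2 * n))))

/-- `Σ_N Σ_N^*` -/
def SigSq {Ω : Type*} (W : ∀ n, Ω → Matrix (Fin (S.M n)) (Fin n) ℂ) (n : ℕ) (ω : Ω) :
    Matrix (Fin (S.M n)) (Fin (S.M n)) ℂ :=
  (S.B n + W n ω) * (S.B n + W n ω)ᴴ

lemma sigSq_isHermitian {Ω : Type*} (W : ∀ n, Ω → Matrix (Fin (S.M n)) (Fin n) ℂ)
    (n : ℕ) (ω : Ω) : (S.SigSq W n ω).IsHermitian :=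
  Matrix.isHermitian_mul_conjTranspose_self _

/-- eigenvalues `λ̂_{k,N}` of `Σ_N Σ_N^*` -/
def eigSig {Ω : Type*} (W : ∀ n, Ω → Matrix (Fin (S.M n)) (Fin n) ℂ) (n : ℕ) (ω : Ω) :
    Fin (S.M n) → ℝ :=
  (S.sigSq_isHermitian W n ω).eigenvalues

/-- `Ω̂_N = Λ̂_N + (σ² c_N / M) 𝟙𝟙ᵀ` -/
def omHat {Ω : Type*} (W : ∀ n, Ω → Matrix (Fin (S.M n)) (Fin n) ℂ) (n : ℕ) (ω : Ω) :
    Matrix (Fin (S.M n)) (Fin (S.M n)) ℝ :=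
  Matrix.diagonal (S.eigSig W n ω) + (S.σ ^ 2 * S.cN n / S.M n) • Matrix.of (fun _ _ => (1 : ℝ))

lemma omHat_isHermitian {Ω : Type*} (W : ∀ n, Ω → Matrix (Fin (S.M n)) (Fin n) ℂ)
    (n : ℕ) (ω : Ω) : (S.omHat W n ω).IsHermitian :=
  isHermitian_diag_add_ones _ _

/-- eigenvalues `ω̂_{k,N}` of `Ω̂_N` -/
def eigOm {Ω : Type*} (W : ∀ n, Ω → Matrix (Fin (S.M n)) (Fin n) ℂ) (n : ℕ) (ω : Ω) :
    Fin (S.M n) → ℝ :=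
  (S.omHat_isHermitian W n ω).eigenvalues

/-- resolvent `Q_N(z)` of `Σ_N Σ_N^*` -/
def QMat {Ω : Type*} (W : ∀ n, Ω → Matrix (Fin (S.M n)) (Fin n) ℂ) (n : ℕ) (ω : Ω) (z : ℂ) :
    Matrix (Fin (S.M n)) (Fin (S.M n)) ℂ :=
  (S.SigSq W n ω - z • (1 : Matrix (Fin (S.M n)) (Fin (S.M n)) ℂ))⁻¹

/-- orthogonal projection on the `l`-th eigenspace of `Σ_N Σ_N^*` -/
def eigProj {Ω : Type*} (W : ∀ n, Ω → Matrix (Fin (S.M n)) (Fin n) ℂ) (n : ℕ) (ω : Ω)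
    (l : Fin (S.M n)) : Matrix (Fin (S.M n)) (Fin (S.M n)) ℂ :=
  ((S.sigSq_isHermitian W n ω).eigenvectorUnitary : Matrix (Fin (S.M n)) (Fin (S.M n)) ℂ) *
    Matrix.diagonal (fun k => if k = l then (1 : ℂ) else 0) *
    star ((S.sigSq_isHermitian W n ω).eigenvectorUnitary : Matrix (Fin (S.M n)) (Fin (S.M n)) ℂ)

/-- resolvent of `Σ_N^* Σ_N` -/
def QtMat {Ω : Type*} (W : ∀ n, Ω → Matrix (Fin (S.M n)) (Fin n) ℂ) (n : ℕ) (ω : Ω) (z : ℂ) :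
    Matrix (Fin n) (Fin n) ℂ :=
  ((S.B n + W n ω)ᴴ * (S.B n + W n ω) - z • (1 : Matrix (Fin n) (Fin n) ℂ))⁻¹

/-- `m̂_N(z)` -/
def mhat {Ω : Type*} (W : ∀ n, Ω → Matrix (Fin (S.M n)) (Fin n) ℂ) (n : ℕ) (ω : Ω) (z : ℂ) : ℂ :=
  (S.M n : ℂ)⁻¹ * (S.QMat W n ω z).trace

/-- `ŵ_N(z)` -/
def what {Ω : Type*} (W : ∀ n, Ω → Matrix (Fin (S.M n)) (Fin n) ℂ) (n : ℕ) (ω : Ω) (z : ℂ) : ℂ :=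
  z * (1 + (S.σ : ℂ) ^ 2 * (S.cN n : ℂ) * S.mhat W n ω z) ^ 2
    - (S.σ : ℂ) ^ 2 * (1 - (S.cN n : ℂ)) * (1 + (S.σ : ℂ) ^ 2 * (S.cN n : ℂ) * S.mhat W n ω z)

/-- the deterministic equivalent `T_N(z)` -/
def TMat (μ : ℕ → Measure ℝ) (n : ℕ) (z : ℂ) : Matrix (Fin (S.M n)) (Fin (S.M n)) ℂ :=
  (((S.σ : ℂ) ^ 2 * (1 - (S.cN n : ℂ)) - z * (1 + (S.σ : ℂ) ^ 2 * (S.cN n : ℂ) * mSt μ n z)) •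
      (1 : Matrix (Fin (S.M n)) (Fin (S.M n)) ℂ)
    + (1 + (S.σ : ℂ) ^ 2 * (S.cN n : ℂ) * mSt μ n z)⁻¹ • (S.B n * (S.B n)ᴴ))⁻¹

/-- `w_N(z)` -/
def wSt (μ : ℕ → Measure ℝ) (n : ℕ) (z : ℂ) : ℂ :=
  z * (1 + (S.σ : ℂ) ^ 2 * (S.cN n : ℂ) * mSt μ n z) ^ 2
    - (S.σ : ℂ) ^ 2 * (1 - (S.cN n : ℂ)) * (1 + (S.σ : ℂ) ^ 2 * (S.cN n : ℂ) * mSt μ n z)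

/-- `δ_N(z) = σ c_N m_N(z)` -/
def deltaSt (μ : ℕ → Measure ℝ) (n : ℕ) (z : ℂ) : ℂ :=
  (S.σ : ℂ) * (S.cN n : ℂ) * mSt μ n z

/-- `δ̃_N(z) = δ_N(z) - σ(1-c_N)/z` -/
def deltaTSt (μ : ℕ → Measure ℝ) (n : ℕ) (z : ℂ) : ℂ :=
  S.deltaSt μ n z - (S.σ : ℂ) * (1 - (S.cN n : ℂ)) / z

/-- `T̃_N(z)` -/
def TtMat (μ : ℕ → Measure ℝ) (n : ℕ) (z : ℂ) : Matrix (Fin n) (Fin n) ℂ :=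
  ((-(z * (1 + (S.σ : ℂ) * S.deltaSt μ n z))) • (1 : Matrix (Fin n) (Fin n) ℂ)
    + (1 + (S.σ : ℂ) * S.deltaTSt μ n z)⁻¹ • ((S.B n)ᴴ * S.B n))⁻¹

/-- `μ_N` is a probability measure carried by `ℝ₊` whose Stieltjes transform solves the
canonical equation. -/
def CanonicalEq (μ : ℕ → Measure ℝ) : Prop :=
  (∀ n, IsProbabilityMeasure (μ n)) ∧ (∀ n, μ n (Set.Iio 0) = 0) ∧
  (∀ n, 1 ≤ n → ∀ z : ℂ, z.im ≠ 0 ∨ z.re < 0 →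
    mSt μ n z = (S.M n : ℂ)⁻¹ * (S.TMat μ n z).trace)

/-- `f_N(w)` -/
def fB (n : ℕ) (w : ℝ) : ℝ := (S.M n : ℝ)⁻¹ * ∑ k, (S.lamB n k - w)⁻¹

/-- `φ_N(w)` -/
def phiB (n : ℕ) (w : ℝ) : ℝ :=
  w * (1 - S.σ ^ 2 * S.cN n * S.fB n w) ^ 2
    + S.σ ^ 2 * (1 - S.cN n) * (1 - S.σ ^ 2 * S.cN n * S.fB n w)

end Model

/-- The cluster structure of the support of `μ_N`. -/
structure Clusters (S : Model) where
  Q : ℕ → ℕ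
  hQ1 : ∀ n, 0 < Q n
  wlo : (n : ℕ) → Fin (Q n) → ℝ
  whi : (n : ℕ) → Fin (Q n) → ℝ
  hw1neg : ∀ n, wlo n ⟨0, hQ1 n⟩ < 0
  hw1pos : ∀ n, 0 < whi n ⟨0, hQ1 n⟩
  hpair : ∀ n q, wlo n q ≤ whi n q
  hlastpair : ∀ n, wlo n ⟨Q n - 1, Nat.sub_lt (hQ1 n) Nat.one_pos⟩
      < whi n ⟨Q n - 1, Nat.sub_lt (hQ1 n) Nat.one_pos⟩
  hchain : ∀ n (q q' : Fin (Q n)), q < q' → whi n q ≤ wlo n q'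
  hextr : ∀ n q, IsLocalExtr (S.phiB n) (wlo n q) ∧ IsLocalExtr (S.phiB n) (whi n q)
  hnonneg : ∀ n q, 0 ≤ S.phiB n (wlo n q) ∧ 0 ≤ S.phiB n (whi n q)

namespace Clusters

variable {S : Model} (C : Clusters S)

def xlo (n : ℕ) (q : Fin (C.Q n)) : ℝ := S.phiB n (C.wlo n q)

def xhi (n : ℕ) (q : Fin (C.Q n)) : ℝ := S.phiB n (C.whi n q)

/-- the support `S_N = ∪_q [x_q^-, x_q^+]` of `μ_N` -/
def supp (n : ℕ) : Set ℝ := ⋃ q : Fin (C.Q n), Set.Icc (C.xlo n q) (C.xhi n q)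

def x1lo (n : ℕ) : ℝ := C.xlo n ⟨0, C.hQ1 n⟩

def x1hi (n : ℕ) : ℝ := C.xhi n ⟨0, C.hQ1 n⟩

def xQhi (n : ℕ) : ℝ := C.xhi n ⟨C.Q n - 1, Nat.sub_lt (C.hQ1 n) Nat.one_pos⟩

/-- (A5) -/
def A5 : Prop :=
  ∀ᶠ n in Filter.atTop, ∀ k, 0 < S.lamB n k →
    S.lamB n k ∉ Set.Ioo (C.wlo n ⟨0, C.hQ1 n⟩) (C.whi n ⟨0, C.hQ1 n⟩)

/-- (A6) -/
def A6 (hQ2 : ∀ n, 2 ≤ C.Q n) : Prop :=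
  0 < Filter.liminf C.x1lo Filter.atTop ∧
  Filter.limsup C.x1hi Filter.atTop
    < Filter.liminf (fun n => C.xlo n ⟨1, hQ2 n⟩) Filter.atTop

/-- the choice of `t_1^-, t_1^+, t_2^-, t_2^+` -/
def Tsep (hQ2 : ∀ n, 2 ≤ C.Q n) (t1m t1p t2m t2p : ℝ) : Prop :=
  0 < t1m ∧ t1m < Filter.liminf C.x1lo Filter.atTop ∧
  Filter.limsup C.x1hi Filter.atTop < t1p ∧ t1p < t2m ∧
  t2m < Filter.liminf (fun n => C.xlo n ⟨1, hQ2 n⟩) Filter.atTop ∧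
  Filter.limsup C.xQhi Filter.atTop < t2p

end Clusters

/-- `𝒯_ε` -/
def Teps (t1m t1p t2m t2p ε : ℝ) : Set ℝ :=
  Set.Icc (t1m - ε) (t1p + ε) ∪ Set.Icc (t2m - ε) (t2p + ε)

/-- the rectangle `R_y` -/
def Rect (t1m t1p ε y : ℝ) : Set ℂ :=
  {z : ℂ | z.re ∈ Set.Icc (t1m - 3 * ε) (t1p + 3 * ε) ∧ z.im ∈ Set.Icc (-y) y}

/-- clockwise contour integral of a scalar function along the boundary of the rectangle
`[xl, xr] × [-y, y]`. -/
def rectIntegralCW (xl xr y : ℝ) (f : ℂ → ℂ) : ℂ :=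
  -((∫ x in xl..xr, f ((x : ℂ) - (y : ℂ) * Complex.I))
    + Complex.I * (∫ v in (-y)..y, f ((xr : ℂ) + (v : ℂ) * Complex.I))
    - (∫ x in xl..xr, f ((x : ℂ) + (y : ℂ) * Complex.I))
    - Complex.I * (∫ v in (-y)..y, f ((xl : ℂ) + (v : ℂ) * Complex.I)))

/-- the estimator `Π̃_N` -/
def Model.PiTilde (S : Model) {Ω : Type*} (W : ∀ n, Ω → Matrix (Fin (S.M n)) (Fin n) ℂ)
    (t1m t1p ε y : ℝ) (n : ℕ) (ω : Ω) : Matrix (Fin (S.M n)) (Fin (S.M n)) ℂ :=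
  Matrix.of fun i j =>
    (2 * (Real.pi : ℂ) * Complex.I)⁻¹ *
      rectIntegralCW (t1m - 3 * ε) (t1p + 3 * ε) y
        (fun z => S.QMat W n ω z i j *
          (deriv (S.what W n ω) z / (1 + (S.σ : ℂ) ^ 2 * (S.cN n : ℂ) * S.mhat W n ω z)))

/-- steering vector `a(θ)` -/
def steer (p : ℕ) (θ : ℝ) : Fin p → ℂ :=
  fun k => ((Real.sqrt p : ℂ))⁻¹ * Complex.exp (Complex.I * (k : ℕ) * (θ : ℂ))

/-- the quadratic form `v ↦ v^* A v` -/
def quadForm {p : ℕ} (A : Matrix (Fin p) (Fin p) ℂ) (v : Fin p → ℂ) : ℂ :=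
  dotProduct (star v) (A.mulVec v)

/-- the regularization term `χ_N = det φ(Σ_N Σ_N^*) · det φ(Ω̂_N)` -/
def Model.chiReg (S : Model) {Ω : Type*} (W : ∀ n, Ω → Matrix (Fin (S.M n)) (Fin n) ℂ)
    (φ0 : ℝ → ℝ) (n : ℕ) (ω : Ω) : ℂ :=
  ((S.sigSq_isHermitian W n ω).cfc φ0).det * ((((S.omHat_isHermitian W n ω).cfc φ0).det : ℝ) : ℂ)

/-- the regularization function `φ` of the paper -/
def IsRegFun (t1m t1p t2m t2p ε : ℝ) (φ0 : ℝ → ℝ) : Prop :=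
  ContDiff ℝ (⊤ : ℕ∞) φ0 ∧ (∀ x, 0 ≤ φ0 x ∧ φ0 x ≤ 1) ∧
  (∀ x ∈ Teps t1m t1p t2m t2p ε, φ0 x = 1) ∧
  (∀ x ∉ Teps t1m t1p t2m t2p (2 * ε), φ0 x = 0)

end RMT



open Complex Filter in
private lemma stmt14_geomIcc (z : ℂ) (hz : z ≠ 1) (M : ℕ) :
    ∑ k ∈ Finset.Icc 1 M, z ^ k = z * (z ^ M - 1) / (z - 1) := by
  have h1 : Finset.Icc 1 M = Finset.Ico 1 (M + 1) := by
    ext k; simp [Nat.lt_succ_iff]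
  rw [h1, Finset.sum_Ico_eq_sum_range]
  simp only [Nat.add_sub_cancel, pow_add, pow_one]
  rw [← Finset.mul_sum, geom_sum_eq hz, mul_div_assoc]

open Complex Filter in
private lemma stmt14_absExpSub (θ : ℝ) : ‖Complex.exp ((θ:ℂ) * Complex.I) - 1‖
    = Real.sqrt (2 - 2 * Real.cos θ) := by
  rw [Complex.exp_mul_I, Complex.norm_def]
  congr 1
  rw [Complex.normSq_apply]
  simp only [Complex.sub_re, Complex.add_re, Complex.cos_ofReal_re, Complex.mul_re,
    Complex.sin_ofReal_re, Complex.I_re, Complex.sin_ofReal_im, Complex.I_im, Complex.one_re,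
    Complex.sub_im, Complex.add_im, Complex.cos_ofReal_im, Complex.mul_im, Complex.one_im]
  nlinarith [Real.sin_sq_add_cos_sq θ]

open Complex Filter in
private lemma stmt14_absLB (x : ℝ) (hx : |x| ≤ 1/2) :
    4 * |x| ≤ ‖Complex.exp (-(2 * Real.pi * Complex.I) * x) - 1‖ := by
  have hθ : -(2 * (Real.pi:ℂ) * Complex.I) * x = ((-(2*Real.pi*x) : ℝ) : ℂ) * Complex.I := by
    push_cast; ring
  rw [hθ, stmt14_absExpSub, Real.cos_neg]
  have h1 : 2 - 2 * Real.cos (2 * Real.pi * x) = 4 * Real.sin (Real.pi * x) ^ 2 := by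
    have h := Real.cos_sq (Real.pi * x)
    have h2 : 2 * (Real.pi * x) = 2 * Real.pi * x := by ring
    rw [h2] at h
    nlinarith [Real.sin_sq_add_cos_sq (Real.pi * x)]
  rw [h1]
  have h3 : 2 * |x| ≤ |Real.sin (Real.pi * x)| := by
    have hax : |Real.sin (Real.pi * x)| = Real.sin (Real.pi * |x|) := by
      rcases abs_cases x with ⟨h, hpos⟩ | ⟨h, hneg⟩
      · rw [h]
        exact _root_.abs_of_nonneg (Real.sin_nonneg_of_nonneg_of_le_pi (by positivity)
          (by nlinarith [Real.pi_pos]))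
      · rw [h, mul_neg, Real.sin_neg]
        refine _root_.abs_of_nonpos ?_
        refine Real.sin_nonpos_of_nonpos_of_neg_pi_le ?_ (by nlinarith [Real.pi_pos])
        nlinarith [Real.pi_pos, hx, abs_nonneg x, h]
    rw [hax]
    have := Real.mul_le_sin (x := Real.pi * |x|) (by positivity)
      (by nlinarith [Real.pi_pos, abs_nonneg x])
    calc 2 * |x| = 2 / Real.pi * (Real.pi * |x|) := by
          field_simp
      _ ≤ Real.sin (Real.pi * |x|) := this
  have h4 : (4 * |x|)^2 ≤ 4 * Real.sin (Real.pi * x) ^ 2 := by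
    nlinarith [abs_nonneg (Real.sin (Real.pi * x)), abs_nonneg x,
      _root_.sq_abs (Real.sin (Real.pi * x))]
  calc 4 * |x| = Real.sqrt ((4*|x|)^2) := by
        rw [Real.sqrt_sq (by positivity)]
    _ ≤ Real.sqrt (4 * Real.sin (Real.pi * x) ^ 2) := Real.sqrt_le_sqrt h4

open Complex Filter in
private lemma stmt14_expNeOne (x : ℝ) (hx : |x| ≤ 1/2) (hx0 : x ≠ 0) :
    Complex.exp (-(2 * Real.pi * Complex.I) * x) ≠ 1 := by
  intro h
  rw [Complex.exp_eq_one_iff] at h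
  obtain ⟨n, hn⟩ := h
  have hx' : (x : ℂ) = -(n : ℂ) := by
    have hne : (2 * (Real.pi:ℂ) * Complex.I) ≠ 0 := by
      simp [Real.pi_ne_zero, Complex.I_ne_zero]
    have : -(x:ℂ) * (2 * Real.pi * Complex.I) = (n:ℂ) * (2 * Real.pi * Complex.I) := by
      rw [← hn]; ring
    have := mul_right_cancel₀ hne this
    linear_combination -this
  have hxr : x = -(n : ℝ) := by exact_mod_cast hx'
  have : |(n:ℝ)| < 1 := by rw [← abs_neg, ← hxr]; linarith [hx]
  have : |n| < 1 := by exact_mod_cast this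
  rw [Int.abs_lt_one_iff] at this
  simp [this] at hxr
  exact hx0 hxr

open Complex Filter in
private lemma stmt14_absExpOne (x : ℝ) :
    ‖Complex.exp (-(2 * Real.pi * Complex.I) * x)‖ = 1 := by
  rw [Complex.norm_exp]
  simp [Complex.exp_re]

open Complex Filter in
private lemma stmt14_betaId (β : ℝ) (hβ : β ≠ 0) :
    (Complex.exp (-(2 * Real.pi * Complex.I) * β) - 1) / (-(2 * Real.pi * Complex.I) * β)
      = Complex.exp (-(Real.pi * β : ℝ) * Complex.I) * Complex.sin ((Real.pi * β : ℝ))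
        / ((Real.pi * β : ℝ) : ℂ) := by
  set u := Complex.exp (-(Real.pi * β : ℝ) * Complex.I) with hu_def
  set v := Complex.exp (((Real.pi * β : ℝ) : ℂ) * Complex.I) with hv_def
  have hu : Complex.exp (-(2 * Real.pi * Complex.I) * β) = u * u := by
    rw [hu_def, ← Complex.exp_add]; push_cast; ring_nf
  have huv : u * v = 1 := by
    rw [hu_def, hv_def, ← Complex.exp_add]
    push_cast
    rw [show -(((Real.pi:ℂ)) * β) * Complex.I + (Real.pi:ℂ) * β * Complex.I = 0 by ring,
      Complex.exp_zero]
  have hsin : Complex.sin ((Real.pi * β : ℝ)) = (u - v) * Complex.I / 2 := by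
    rw [Complex.sin, hu_def, hv_def]
  have hd1 : (-(2 * (Real.pi:ℂ) * Complex.I) * β) ≠ 0 := by
    simp [Real.pi_ne_zero, Complex.I_ne_zero, hβ]
  have hd2 : ((Real.pi * β : ℝ) : ℂ) ≠ 0 := by
    simp [Real.pi_ne_zero, hβ]
  rw [hsin, hu, div_eq_div_iff hd1 hd2]
  push_cast
  linear_combination ((Real.pi:ℂ)*β)*huv + (u*(u-v)*(Real.pi:ℂ)*β)*Complex.I_sq

open Complex Filter in
private lemma stmt14_sum_rw (x : ℝ) (M : ℕ) :
    ∑ k ∈ Finset.Icc 1 M, Complex.exp (-(2 * Real.pi * Complex.I) * (k : ℕ) * (x : ℝ))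
      = ∑ k ∈ Finset.Icc 1 M, (Complex.exp (-(2 * Real.pi * Complex.I) * x)) ^ k := by
  refine Finset.sum_congr rfl fun k _ => ?_
  rw [← Complex.exp_nat_mul]
  congr 1
  ring

open Complex Filter in
private lemma stmt14_qtend (a : ℕ → ℝ)
    (h : Filter.Tendsto (fun M : ℕ => (M : ℝ) *
      ‖Complex.exp (-(2 * Real.pi * Complex.I) * (a M)) - 1‖)
      Filter.atTop Filter.atTop) :
    Filter.Tendsto (fun M : ℕ => (M : ℂ)⁻¹ *
      ∑ k ∈ Finset.Icc 1 M, Complex.exp (-(2 * Real.pi * Complex.I) * (k : ℕ) * (a M : ℝ)))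
      Filter.atTop (nhds 0) := by
  set g : ℕ → ℝ := fun M =>
    ‖Complex.exp (-(2 * Real.pi * Complex.I) * (a M)) - 1‖ with hg
  refine squeeze_zero_norm' (a := fun M : ℕ => 2 / ((M:ℝ) * g M)) ?_
    (tendsto_const_nhds.div_atTop h)
  filter_upwards [h.eventually_ge_atTop 1] with M hM
  have hMg : (0:ℝ) < (M:ℝ) * g M := lt_of_lt_of_le one_pos hM
  have hgpos : 0 < g M := by
    rcases (mul_pos_iff.mp hMg) with ⟨_, h2⟩ | ⟨h1, _⟩
    · exact h2
    · exact absurd h1 (not_lt.mpr (Nat.cast_nonneg M))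
  have hz : Complex.exp (-(2 * Real.pi * Complex.I) * (a M)) ≠ 1 :=
    sub_ne_zero.mp (norm_ne_zero_iff.mp (ne_of_gt hgpos))
  rw [stmt14_sum_rw, stmt14_geomIcc _ hz]
  rw [norm_mul, norm_inv, Complex.norm_natCast, norm_div, norm_mul,
    stmt14_absExpOne, one_mul]
  have hzM : ‖Complex.exp (-(2 * Real.pi * Complex.I) * (a M)) ^ M - 1‖ ≤ 2 := by
    have h5 := norm_sub_le (Complex.exp (-(2 * Real.pi * Complex.I) * (a M)) ^ M) 1
    rw [norm_pow, stmt14_absExpOne, one_pow, norm_one] at h5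
    linarith
  calc (M:ℝ)⁻¹ * (‖Complex.exp (-(2 * Real.pi * Complex.I) * (a M)) ^ M - 1‖ / g M)
      ≤ (M:ℝ)⁻¹ * (2 / g M) := by gcongr
    _ = 2 / ((M:ℝ) * g M) := by rw [← mul_div_assoc, inv_mul_eq_div, div_div]


/-- asymptotics of `q_M(α_M) = (1/M) ∑_{k=1}^M e^{-2πik α_M}`. -/
theorem statement_14 (α : ℝ) (a : ℕ → ℝ)
    (hK : ∃ Kc : Set ℝ, IsCompact Kc ∧ Kc ⊆ Set.Ioc (-(1 / 2) : ℝ) (1 / 2) ∧ ∀ M, a M ∈ Kc)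
    (hlim : Filter.Tendsto a Filter.atTop (nhds α)) :
    ((α ≠ 0 ∨ (α = 0 ∧ Filter.Tendsto (fun M : ℕ => (M : ℝ) * |a M|) Filter.atTop Filter.atTop)) →
      Filter.Tendsto
        (fun M : ℕ => (M : ℂ)⁻¹ *
          ∑ k ∈ Finset.Icc 1 M, Complex.exp (-(2 * Real.pi * Complex.I) * (k : ℕ) * (a M : ℝ)))
        Filter.atTop (nhds 0)) ∧
    (∀ β : ℝ, α = 0 → Filter.Tendsto (fun M : ℕ => (M : ℝ) * a M) Filter.atTop (nhds β) →
      Filter.Tendsto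
        (fun M : ℕ => (M : ℂ)⁻¹ *
          ∑ k ∈ Finset.Icc 1 M, Complex.exp (-(2 * Real.pi * Complex.I) * (k : ℕ) * (a M : ℝ)))
        Filter.atTop
        (nhds (if β = 0 then 1 else
          Complex.exp (-(Real.pi * β : ℝ) * Complex.I) *
            Complex.sin ((Real.pi * β : ℝ)) / ((Real.pi * β : ℝ))))) := by
  obtain ⟨Kc, hKcomp, hKsub, hKmem⟩ := hK
  have haM : ∀ M, |a M| ≤ 1 / 2 := fun M => by
    have := hKsub (hKmem M)
    rw [abs_le]; exact ⟨le_of_lt this.1, this.2⟩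
  have hαK : α ∈ Kc := hKcomp.isClosed.mem_of_tendsto hlim (Eventually.of_forall hKmem)
  have hα2 : |α| ≤ 1 / 2 := by
    have := hKsub hαK
    rw [abs_le]; exact ⟨le_of_lt this.1, this.2⟩
  constructor
  · rintro (hα | ⟨hα0, hMabs⟩)
    · apply stmt14_qtend
      have hc : 0 < ‖Complex.exp (-(2 * Real.pi * Complex.I) * α) - 1‖ := by
        rw [norm_pos_iff, sub_ne_zero]
        exact stmt14_expNeOne α hα2 hα
      have hcont : Continuous fun x : ℝ =>
          ‖Complex.exp (-(2 * Real.pi * Complex.I) * x) - 1‖ :=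
        continuous_norm.comp
          (((Complex.continuous_exp.comp (continuous_const.mul Complex.continuous_ofReal)).sub
            continuous_const))
      exact Filter.Tendsto.atTop_mul_pos hc tendsto_natCast_atTop_atTop
        ((hcont.tendsto α).comp hlim)
    · apply stmt14_qtend
      refine tendsto_atTop_mono' _ (Eventually.of_forall fun M => ?_)
        (hMabs.const_mul_atTop (show (0:ℝ) < 4 by norm_num))
      calc 4 * ((M:ℝ) * |a M|) = (M:ℝ) * (4 * |a M|) := by ring
        _ ≤ (M:ℝ) * ‖Complex.exp (-(2 * Real.pi * Complex.I) * (a M)) - 1‖ := by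
            exact mul_le_mul_of_nonneg_left (stmt14_absLB _ (haM M)) (Nat.cast_nonneg M)
  · intro β hα0 hβlim
    by_cases hβ : β = 0
    · subst hβ
      rw [if_pos rfl]
      rw [tendsto_iff_norm_sub_tendsto_zero]
      have habs0 : Tendsto (fun M : ℕ => (M:ℝ) * |a M|) atTop (nhds 0) := by
        have := hβlim.abs
        rw [abs_zero] at this
        refine this.congr fun M => ?_
        rw [abs_mul, Nat.abs_cast]
      refine squeeze_zero_norm' (a := fun M : ℕ => 4 * Real.pi * ((M:ℝ) * |a M|)) ?_ ?_
      · have hev1 : ∀ᶠ M : ℕ in atTop, 2 * Real.pi * ((M:ℝ) * |a M|) ≤ 1 := by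
          have h0 : Tendsto (fun M : ℕ => 2 * Real.pi * ((M:ℝ) * |a M|)) atTop (nhds 0) := by
            simpa using habs0.const_mul (2 * Real.pi)
          exact h0.eventually_le_const one_pos
        filter_upwards [hev1, eventually_ge_atTop 1] with M hsmall hM1
        have hMne : (M:ℂ) ≠ 0 := Nat.cast_ne_zero.mpr (by omega)
        have key : (M : ℂ)⁻¹ *
            (∑ k ∈ Finset.Icc 1 M,
              Complex.exp (-(2 * Real.pi * Complex.I) * (k : ℕ) * (a M : ℝ))) - 1
            = (M:ℂ)⁻¹ * ∑ k ∈ Finset.Icc 1 M,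
              (Complex.exp (-(2 * Real.pi * Complex.I) * (k : ℕ) * (a M : ℝ)) - 1) := by
          rw [Finset.sum_sub_distrib, Finset.sum_const, Nat.card_Icc, mul_sub]
          simp only [Nat.add_sub_cancel, nsmul_eq_mul, mul_one]
          rw [inv_mul_cancel₀ hMne]
        rw [norm_norm, key, norm_mul, norm_inv, Complex.norm_natCast]
        have hbound : ∀ k ∈ Finset.Icc 1 M,
            ‖Complex.exp (-(2 * Real.pi * Complex.I) * (k : ℕ) * (a M : ℝ)) - 1‖
              ≤ 4 * Real.pi * ((M:ℝ) * |a M|) := by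
          intro k hk
          rw [Finset.mem_Icc] at hk
          have habsarg : ‖-(2 * Real.pi * Complex.I) * (k : ℕ) * ((a M : ℝ) : ℂ)‖
              = 2 * Real.pi * k * |a M| := by
            simp [norm_mul, Complex.norm_real, Complex.norm_natCast, Complex.norm_I,
              abs_of_pos Real.pi_pos]
          have hkM : 2 * Real.pi * k * |a M| ≤ 2 * Real.pi * M * |a M| := by
            have : (k:ℝ) ≤ M := Nat.cast_le.mpr hk.2
            have h2 := mul_le_mul_of_nonneg_right this (abs_nonneg (a M))
            nlinarith [Real.pi_pos]
          have hle1 : ‖-(2 * Real.pi * Complex.I) * (k : ℕ) * ((a M : ℝ) : ℂ)‖ ≤ 1 := by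
            rw [habsarg]
            calc 2 * Real.pi * k * |a M| ≤ 2 * Real.pi * M * |a M| := hkM
              _ = 2 * Real.pi * ((M:ℝ) * |a M|) := by ring
              _ ≤ 1 := hsmall
          calc ‖Complex.exp (-(2 * Real.pi * Complex.I) * (k : ℕ) * (a M : ℝ)) - 1‖
              ≤ 2 * ‖-(2 * Real.pi * Complex.I) * (k : ℕ) * ((a M : ℝ):ℂ)‖ :=
                Complex.norm_exp_sub_one_le hle1
            _ = 2 * (2 * Real.pi * k * |a M|) := by rw [habsarg]
            _ ≤ 2 * (2 * Real.pi * M * |a M|) := by linarith [hkM]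
            _ = 4 * Real.pi * ((M:ℝ) * |a M|) := by ring
        calc ((M:ℝ))⁻¹ * ‖∑ k ∈ Finset.Icc 1 M,
              (Complex.exp (-(2 * Real.pi * Complex.I) * (k : ℕ) * (a M : ℝ)) - 1)‖
            ≤ ((M:ℝ))⁻¹ * ∑ k ∈ Finset.Icc 1 M,
              ‖Complex.exp (-(2 * Real.pi * Complex.I) * (k : ℕ) * (a M : ℝ)) - 1‖ := by
              gcongr
              exact norm_sum_le _ _
          _ ≤ ((M:ℝ))⁻¹ * ∑ k ∈ Finset.Icc 1 M, (4 * Real.pi * ((M:ℝ) * |a M|)) := by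
              gcongr with k hk
              exact hbound k hk
          _ = 4 * Real.pi * ((M:ℝ) * |a M|) := by
              have hMr : (M:ℝ) ≠ 0 := Nat.cast_ne_zero.mpr (by omega)
              rw [Finset.sum_const, Nat.card_Icc, Nat.add_sub_cancel, nsmul_eq_mul, ← mul_assoc,
                inv_mul_cancel₀ hMr, one_mul]
      · simpa using habs0.const_mul (4 * Real.pi)
    · rw [if_neg hβ]
      have ha0 : Tendsto a atTop (nhds 0) := hα0 ▸ hlim
      set w : ℕ → ℂ := fun M => -(2 * (Real.pi:ℂ) * Complex.I) * ((a M : ℝ) : ℂ) with hw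
      have hcw : Continuous fun x : ℝ => -(2 * (Real.pi:ℂ) * Complex.I) * ((x : ℝ) : ℂ) :=
        continuous_const.mul Complex.continuous_ofReal
      have hw0 : Tendsto w atTop (nhds 0) := by
        rw [hw]
        have := (hcw.tendsto 0).comp ha0
        simpa [Function.comp_def, neg_mul] using this
      have hane : ∀ᶠ M : ℕ in atTop, a M ≠ 0 := by
        filter_upwards [hβlim.eventually_ne hβ] with M hM h0
        exact hM (by rw [h0, mul_zero])
      have hwne : ∀ᶠ M : ℕ in atTop, w M ≠ 0 := by
        filter_upwards [hane] with M hM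
        exact mul_ne_zero (by simp [Real.pi_ne_zero, Complex.I_ne_zero])
          (Complex.ofReal_ne_zero.mpr hM)
      have hzne : ∀ᶠ M : ℕ in atTop, Complex.exp (w M) ≠ 1 := by
        filter_upwards [hane] with M hM
        exact stmt14_expNeOne _ (haM M) hM
      -- z → 1
      have h1 : Tendsto (fun M => Complex.exp (w M)) atTop (nhds 1) := by
        have := (Complex.continuous_exp.tendsto 0).comp hw0
        simpa [Function.comp_def] using this
      -- z^M → exp(-(2πI)β)
      have hMa : Tendsto (fun M : ℕ => (((M:ℝ) * a M : ℝ) : ℂ)) atTop (nhds (β : ℂ)) :=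
        (Complex.continuous_ofReal.tendsto β).comp hβlim
      have h2 : Tendsto (fun M : ℕ => Complex.exp (w M) ^ M) atTop
          (nhds (Complex.exp (-(2 * Real.pi * Complex.I) * β))) := by
        have hc : Tendsto (fun M : ℕ =>
            Complex.exp (-(2 * (Real.pi:ℂ) * Complex.I) * (((M:ℝ) * a M : ℝ) : ℂ))) atTop
            (nhds (Complex.exp (-(2 * Real.pi * Complex.I) * β))) :=
          (Complex.continuous_exp.tendsto _).comp (hMa.const_mul _)
        refine hc.congr fun M => ?_
        rw [← Complex.exp_nat_mul]
        congr 1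
        push_cast
        ring
      -- slope
      have hslope : Tendsto (fun M => (Complex.exp (w M) - 1) / w M) atTop (nhds 1) := by
        have hd := Complex.hasDerivAt_exp 0
        rw [hasDerivAt_iff_tendsto_slope, Complex.exp_zero] at hd
        have hwm : Tendsto w atTop (nhdsWithin 0 {(0:ℂ)}ᶜ) :=
          tendsto_nhdsWithin_iff.mpr ⟨hw0, hwne.mono fun M hM => hM⟩
        have := hd.comp hwm
        refine this.congr fun M => ?_
        simp [Function.comp, slope_def_field, Complex.exp_zero]
      have h3 : Tendsto (fun M : ℕ => (M:ℂ) * (Complex.exp (w M) - 1)) atTop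
          (nhds (-(2 * Real.pi * Complex.I) * β * 1)) := by
        have hA : Tendsto (fun M : ℕ => -(2 * (Real.pi:ℂ) * Complex.I) * (((M:ℝ) * a M : ℝ) : ℂ))
            atTop (nhds (-(2 * Real.pi * Complex.I) * β)) := hMa.const_mul _
        refine (hA.mul hslope).congr' ?_
        filter_upwards [hwne] with M hM
        have hMw : -(2 * (Real.pi:ℂ) * Complex.I) * (((M:ℝ) * a M : ℝ) : ℂ) = (M:ℂ) * w M := by
          rw [hw]; push_cast; ring
        rw [hMw]
        field_simp
      have hden : -(2 * (Real.pi:ℂ) * Complex.I) * β * 1 ≠ 0 := by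
        simp [Real.pi_ne_zero, Complex.I_ne_zero, hβ]
      have hfin := ((h1.mul (h2.sub (tendsto_const_nhds (x := (1:ℂ))))).div h3 hden)
      have hval : (1 : ℂ) * (Complex.exp (-(2 * Real.pi * Complex.I) * β) - 1)
          / (-(2 * Real.pi * Complex.I) * β * 1)
          = Complex.exp (-(Real.pi * β : ℝ) * Complex.I) * Complex.sin ((Real.pi * β : ℝ))
            / ((Real.pi * β : ℝ) : ℂ) := by
        rw [one_mul, mul_one, stmt14_betaId β hβ]
      rw [hval] at hfin
      refine hfin.congr' ?_
      filter_upwards [hzne, eventually_ge_atTop 1] with M hz hM1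
      have hMne : (M:ℂ) ≠ 0 := Nat.cast_ne_zero.mpr (by omega)
      have hz1 : Complex.exp (w M) - 1 ≠ 0 := sub_ne_zero.mpr hz
      simp only [Pi.div_apply, hw]
      rw [stmt14_sum_rw, stmt14_geomIcc _ hz, mul_comm ((M:ℕ):ℂ), ← div_div, div_eq_inv_mul]
end
end

section
/- Let Λ be a real diagonal M×M matrix, γ ∈ ℝ, and Ω = Λ + γ𝟙𝟙^T, where 𝟙 = (1,…,1)^T ∈ ℝ^M. For any continuous function ψ : ℝ → ℝ, if Λ_{kk} = Λ_{ll} for some indices k, l, then [ψ(Ω)]_{kk} = [ψ(Ω)]_{ll}. -/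
open MeasureTheory ProbabilityTheory Matrix Filter Topology

noncomputable section

noncomputable def permStarEquiv {M : ℕ} (e : Equiv.Perm (Fin M)) :
    Matrix (Fin M) (Fin M) ℝ ≃⋆ₐ[ℝ] Matrix (Fin M) (Fin M) ℝ :=
  { Matrix.reindexAlgEquiv ℝ ℝ e with
    map_smul' := fun c A => by ext i j; simp [Matrix.reindexAlgEquiv_apply]
    map_star' := fun A => by
      ext i j
      simp [Matrix.reindexAlgEquiv_apply, Matrix.conjTranspose_apply] }

/-- if `Λ_{kk} = Λ_{ll}` then `[ψ(Λ + γ𝟙𝟙ᵀ)]_{kk} = [ψ(Λ + γ𝟙𝟙ᵀ)]_{ll}`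
for any continuous `ψ`. -/
theorem statement_16 (M : ℕ) (d : Fin M → ℝ) (γ : ℝ) (ψ : ℝ → ℝ) (hψ : Continuous ψ)
    (k l : Fin M) (h : d k = d l) :
    ((RMT.isHermitian_diag_add_ones d γ).cfc ψ) k k
      = ((RMT.isHermitian_diag_add_ones d γ).cfc ψ) l l := by
  classical
  set Ω : Matrix (Fin M) (Fin M) ℝ :=
    Matrix.diagonal d + γ • Matrix.of (fun _ _ => (1 : ℝ)) with hΩ
  set e := Equiv.swap k l with he
  have hfix : permStarEquiv e Ω = Ω := by
    ext i j
    show Ω (e.symm i) (e.symm j) = Ω i j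
    by_cases hij : i = j
    · subst hij
      simp only [hΩ, Matrix.add_apply, Matrix.diagonal_apply_eq, Matrix.smul_apply,
        Matrix.of_apply]
      congr 1
      rcases eq_or_ne i k with rfl | hik
      · simp [he, Equiv.swap_apply_left, h]
      rcases eq_or_ne i l with rfl | hil
      · simp [he, Equiv.swap_apply_right, h]
      · simp [he, Equiv.swap_apply_of_ne_of_ne hik hil]
    · have hij' : e.symm i ≠ e.symm j := fun hc => hij (e.symm.injective hc)
      simp [hΩ, Matrix.diagonal_apply_ne _ hij', Matrix.diagonal_apply_ne _ hij]
  have hsa : IsSelfAdjoint Ω := RMT.isHermitian_diag_add_ones d γ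
  have hcont : Continuous (permStarEquiv e) := by
    show Continuous fun A : Matrix (Fin M) (Fin M) ℝ => A.submatrix e.symm e.symm
    exact continuous_id.matrix_submatrix _ _
  have hsa' : IsSelfAdjoint (permStarEquiv e Ω) := by rw [hfix]; exact hsa
  have key : permStarEquiv e (cfc ψ Ω) = cfc ψ (permStarEquiv e Ω) :=
    StarAlgHomClass.map_cfc (permStarEquiv e) ψ Ω hψ.continuousOn hcont hsa hsa'
  rw [hfix] at key
  have hX : (RMT.isHermitian_diag_add_ones d γ).cfc ψ = cfc ψ Ω :=
    ((RMT.isHermitian_diag_add_ones d γ).cfc_eq ψ).symm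
  rw [hX]
  have hkl : cfc ψ Ω k k = cfc ψ Ω l l := by
    conv_rhs => rw [← key]
    show _ = cfc ψ Ω (e.symm l) (e.symm l)
    simp [he, Equiv.swap_apply_right]
  exact hkl
end
end
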